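/- Let ε > 0 and suppose that for every H-free tournament S on fewer than n vertices one has tr(S) ≥ |S|^ε. Let T be an H-free tournament on n vertices containing disjoint vertex sets A, B with d(A,B) = 1, |A| ≥ c·n, B transitive with |B| ≥ c·tr(T), where 0 < c < 1 and ε ≤ log_c(1-c). Then tr(T) ≥ n^ε. -/

import Mathlib

open Finset

structure Tournament (V : Type*) where
  adj : V → V → Prop
  irrefl : ∀ v, ¬ adj v v
  asymm : ∀ u v, adj u v → ¬ adj v u
  total : ∀ u v, u ≠ v → adj u v ∨ adj v u

namespace Tournament

variable {V : Type*} [Fintype V] [DecidableEq V]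

open Classical in
/-- number of directed edges from `X` to `Y` -/
noncomputable def e (T : Tournament V) (X Y : Finset V) : ℕ :=
  ((X ×ˢ Y).filter fun p => T.adj p.1 p.2).card

/-- directed density from `X` to `Y` -/
noncomputable def density (T : Tournament V) (X Y : Finset V) : ℝ :=
  (T.e X Y : ℝ) / ((X.card : ℝ) * (Y.card : ℝ))

/-- `S` induces a transitive subtournament -/
def IsTransSet (T : Tournament V) (S : Finset V) : Prop :=
  ∀ a ∈ S, ∀ b ∈ S, ∀ c ∈ S, T.adj a b → T.adj b c → T.adj a c

open Classical in
/-- size of the largest transitive subtournament -/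
noncomputable def tr (T : Tournament V) : ℕ :=
  Finset.sup ((Finset.univ : Finset (Finset V)).filter fun S => T.IsTransSet S) Finset.card

/-- `T` contains a copy of `H` -/
def HasCopy {W : Type*} (T : Tournament V) (H : Tournament W) : Prop :=
  ∃ f : W ↪ V, ∀ a b, H.adj a b → T.adj (f a) (f b)

end Tournament

/-!
A largest transitive set of `T` restricted to `A` has size at least `|A|^ε ≥ (c n)^ε` by the
induction hypothesis (`|A| < n` as `B ≠ ∅`); followed by the transitive set `B`, which it
completely dominates, it stays transitive. Hence `tr T ≥ (c n)^ε + c · tr T`, so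
`(1 - c) · tr T ≥ c^ε n^ε ≥ (1 - c) n^ε`, since `ε ≤ log_c (1 - c)` means `c^ε ≥ 1 - c`.
-/

namespace Tournament

variable {V U : Type*}

def comap (T : Tournament V) (f : U ↪ V) : Tournament U where
  adj u v := T.adj (f u) (f v)
  irrefl _ := T.irrefl _
  asymm _ _ := T.asymm _ _
  total _ _ huv := T.total _ _ fun h => huv (f.injective h)

lemma HasCopy.of_comap {W : Type*} {T : Tournament V} {H : Tournament W} {f : U ↪ V}
    (h : (T.comap f).HasCopy H) : T.HasCopy H :=
  let ⟨g, hg⟩ := h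
  ⟨g.trans f, hg⟩

lemma IsTransSet.card_le_tr [Fintype V] {T : Tournament V} {S : Finset V} (hS : T.IsTransSet S) :
    #S ≤ T.tr := by
  classical
  exact le_sup (f := card) (mem_filter.2 ⟨mem_univ S, hS⟩)

lemma exists_isTransSet_card_eq_tr [Fintype V] (T : Tournament V) :
    ∃ S : Finset V, T.IsTransSet S ∧ #S = T.tr := by
  classical
  have hempty : T.IsTransSet ∅ := by simp [IsTransSet]
  obtain ⟨S, hS, hcard⟩ := exists_mem_eq_sup _ ⟨∅, mem_filter.2 ⟨mem_univ _, hempty⟩⟩ card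
  exact ⟨S, (mem_filter.1 hS).2, by rw [tr, hcard]⟩

lemma IsTransSet.map {T : Tournament V} {f : U ↪ V} {S : Finset U}
    (hS : (T.comap f).IsTransSet S) : T.IsTransSet (S.map f) := by
  simp only [IsTransSet, mem_map, forall_exists_index, and_imp]
  rintro _ a ha rfl _ b hb rfl _ x hx rfl
  exact hS a ha b hb x hx

lemma IsTransSet.union [DecidableEq V] {T : Tournament V} {S B : Finset V} (hS : T.IsTransSet S)
    (hB : T.IsTransSet B) (hSB : ∀ a ∈ S, ∀ b ∈ B, T.adj a b) : T.IsTransSet (S ∪ B) := by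
  have hBS : ∀ b ∈ B, ∀ a ∈ S, ¬ T.adj b a := fun b hb a ha => T.asymm _ _ (hSB a ha b hb)
  intro a ha b hb x hx hab hbx
  rw [mem_union] at ha hb hx
  rcases ha with ha | ha <;> rcases hb with hb | hb <;> rcases hx with hx | hx
  all_goals first
    | exact hS a ha b hb x hx hab hbx
    | exact hB a ha b hb x hx hab hbx
    | exact hSB a ha x hx
    | exact absurd hab (hBS a ha b hb)
    | exact absurd hbx (hBS b hb x hx)

lemma disjoint_of_forall_adj (T : Tournament V) {A B : Finset V}
    (hAB : ∀ a ∈ A, ∀ b ∈ B, T.adj a b) : Disjoint A B :=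
  disjoint_left.2 fun a ha hb => T.irrefl a (hAB a ha a hb)

lemma tr_comap_add_card_le_tr [Fintype V] [Fintype U] [DecidableEq V] (T : Tournament V)
    (f : U ↪ V) {A B : Finset V} (hf : ∀ u, f u ∈ A) (hB : T.IsTransSet B)
    (hAB : ∀ a ∈ A, ∀ b ∈ B, T.adj a b) : (T.comap f).tr + #B ≤ T.tr := by
  obtain ⟨S, hS, hcard⟩ := (T.comap f).exists_isTransSet_card_eq_tr
  have hSA : S.map f ⊆ A := by
    simp only [subset_iff, mem_map]
    rintro _ ⟨u, -, rfl⟩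
    exact hf u
  have hSB : ∀ a ∈ S.map f, ∀ b ∈ B, T.adj a b := fun a ha => hAB a (hSA ha)
  calc (T.comap f).tr + #B = #(S.map f ∪ B) := by
        rw [card_union_of_disjoint (T.disjoint_of_forall_adj hSB), card_map, hcard]
    _ ≤ T.tr := (hS.map.union hB hSB).card_le_tr

lemma adj_of_density_eq_one {T : Tournament V} {X Y : Finset V} (h : T.density X Y = 1) :
    ∀ a ∈ X, ∀ b ∈ Y, T.adj a b := by
  have hne : (#X : ℝ) * #Y ≠ 0 := by
    rintro h0
    simp [density, h0] at h
  have he : T.e X Y = #(X ×ˢ Y) := by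
    rw [density, div_eq_one_iff_eq hne] at h
    rw [card_product]
    exact_mod_cast h
  intro a ha b hb
  rw [e] at he
  convert card_filter_eq_iff.1 he (a, b) (mem_product.2 ⟨ha, hb⟩)

lemma nonempty_right_of_density_eq_one {T : Tournament V} {X Y : Finset V}
    (h : T.density X Y = 1) : Y.Nonempty := by
  rw [nonempty_iff_ne_empty]
  rintro rfl
  simp [density] at h

end Tournament

lemma one_sub_le_rpow_of_le_logb {c ε : ℝ} (hc0 : 0 < c) (hc1 : c < 1)
    (hε : ε ≤ Real.logb c (1 - c)) : 1 - c ≤ c ^ ε := by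
  calc 1 - c = c ^ Real.logb c (1 - c) := (Real.rpow_logb hc0 hc1.ne (by linarith)).symm
    _ ≤ c ^ ε := Real.rpow_le_rpow_of_exponent_ge hc0 hc1.le hε

lemma rpow_le_of_mul_rpow_add_mul_le {n t c ε : ℝ} (hn : 0 ≤ n) (hc0 : 0 ≤ c) (hc1 : c < 1)
    (hcε : 1 - c ≤ c ^ ε) (h : (c * n) ^ ε + c * t ≤ t) : n ^ ε ≤ t := by
  have hmul : (1 - c) * n ^ ε ≤ (1 - c) * t :=
    calc (1 - c) * n ^ ε ≤ c ^ ε * n ^ ε := by gcongr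
      _ = (c * n) ^ ε := (Real.mul_rpow hc0 hn).symm
      _ ≤ (1 - c) * t := by linarith
  exact le_of_mul_le_mul_left hmul (by linarith)

open Tournament in
theorem stmt_4_general {W : Type*} (H : Tournament W) (n : ℕ) (T : Tournament (Fin n))
    (ε c : ℝ) (hε : 0 < ε) (hc0 : 0 < c) (hc1 : c < 1)
    (hεc : ε ≤ Real.logb c (1 - c))
    (hind : ∀ m : ℕ, m < n → ∀ S : Tournament (Fin m),
      ¬ S.HasCopy H → (m : ℝ) ^ ε ≤ (S.tr : ℝ))
    (hfree : ¬ T.HasCopy H)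
    (A B : Finset (Fin n))
    (hdens : T.density A B = 1)
    (hA : c * (n : ℝ) ≤ (A.card : ℝ))
    (hBtrans : T.IsTransSet B)
    (hB : c * (T.tr : ℝ) ≤ (B.card : ℝ)) :
    (n : ℝ) ^ ε ≤ (T.tr : ℝ) := by
  have hadj := adj_of_density_eq_one hdens
  obtain ⟨b, hb⟩ := nonempty_right_of_density_eq_one hdens
  have hAn : #A < n := by
    simpa using card_lt_univ_of_notMem (disjoint_right.1 (T.disjoint_of_forall_adj hadj) hb)
  let f : Fin #A ↪ Fin n := (A.orderEmbOfFin rfl).toEmbedding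
  have hindA : (#A : ℝ) ^ ε ≤ (T.comap f).tr := hind _ hAn _ fun h => hfree h.of_comap
  have hkey : ((T.comap f).tr : ℝ) + #B ≤ T.tr := by
    exact_mod_cast T.tr_comap_add_card_le_tr f (A.orderEmbOfFin_mem rfl) hBtrans hadj
  have hcn : (c * n) ^ ε ≤ (#A : ℝ) ^ ε := Real.rpow_le_rpow (by positivity) hA hε.le
  exact rpow_le_of_mul_rpow_add_mul_le (Nat.cast_nonneg n) hc0.le hc1
    (one_sub_le_rpow_of_le_logb hc0 hc1 hεc) (by linarith)

open Tournament in
theorem stmt_4 {W : Type*} (H : Tournament W) (n : ℕ) (T : Tournament (Fin n))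
    (ε c : ℝ) (hε : 0 < ε) (hc0 : 0 < c) (hc1 : c < 1)
    (hεc : ε ≤ Real.logb c (1 - c))
    (hind : ∀ m : ℕ, m < n → ∀ S : Tournament (Fin m),
      ¬ S.HasCopy H → (m : ℝ) ^ ε ≤ (S.tr : ℝ))
    (hfree : ¬ T.HasCopy H)
    (A B : Finset (Fin n)) (hAB : Disjoint A B)
    (hdens : T.density A B = 1)
    (hA : c * (n : ℝ) ≤ (A.card : ℝ))
    (hBtrans : T.IsTransSet B)
    (hB : c * (T.tr : ℝ) ≤ (B.card : ℝ)) :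
    (n : ℝ) ^ ε ≤ (T.tr : ℝ) :=
  stmt_4_general H n T ε c hε hc0 hc1 hεc hind hfree A B hdens hA hBtrans hB
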